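/- arXiv:0911.2451 — 4 statements merged into one kernel-verified Lean document; each statement's English description precedes it below -/
import Mathlib

section
/- Let A : ℝ^N → ℝ^N be a C¹ vector potential and set B_{jk} := ∂_j A_k − ∂_k A_j. Then for all points a, b, c ∈ ℝ^N the circulation of A around the boundary of the triangle ⟨a,b,c⟩ equals the flux of B through it, i.e. Γ^A[a,b] + Γ^A[b,c] + Γ^A[c,a] = Γ^B⟨a,b,c⟩, where the flux is given by the parametrization Γ^B⟨a,b,c⟩ = Σ_{j,k} (b_j − a_j)(c_k − b_k) ∫₀¹∫₀¹ μ B_{jk}(a + μ(b−a) + μν(c−b)) dν dμ. -/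
open MeasureTheory Filter Topology Real

noncomputable section

abbrev Vec (N : ℕ) := Fin N → ℝ

/-- Circulation `Γ^A[x,y]` of the vector potential `A` along the segment from `x` to `y`. -/
def circA {N : ℕ} (A : Vec N → Vec N) (x y : Vec N) : ℝ :=
  ∫ s in (0:ℝ)..1, ∑ j, (y j - x j) * A (x + s • (y - x)) j

/-- Flux `Γ^B⟨a,b,c⟩` of the magnetic field `B` through the triangle with vertices
`a`, `b`, `c`, given by the standard parametrization. -/
def fluxB {N : ℕ} (B : Fin N → Fin N → Vec N → ℝ) (a b c : Vec N) : ℝ :=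
  ∑ j, ∑ k, (b j - a j) * (c k - b k) *
    ∫ μ in (0:ℝ)..1, ∫ ν in (0:ℝ)..1, μ * B j k (a + μ • (b - a) + (μ * ν) • (c - b))

/-- The magnetic field of a vector potential: `(Bof A) j k = ∂_j A_k - ∂_k A_j`. -/
def Bof {N : ℕ} (A : Vec N → Vec N) (j k : Fin N) (x : Vec N) : ℝ :=
  fderiv ℝ (fun y => A y k) x (Pi.single j 1) - fderiv ℝ (fun y => A y j) x (Pi.single k 1)

/-!
Pull `A` back along the parametrization `(μ, ν) ↦ a + μ (b - a) + μ ν (c - b)` of the triangle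
by the unit square, and apply Green's theorem on the square. The four sides of the square map to
the sides `[a, b]` (`ν = 0`), `[b, c]` (`μ = 1`), `[a, c]` (`ν = 1`) and to the vertex `a`
(`μ = 0`), so the boundary integral is the circulation around the triangle; the curl of the pulled
back form is the Jacobian `μ` times `B` contracted with `b - a` and `c - b`.
-/

lemma ContinuousLinearMap.apply_eq_sum_mul_apply_single {ι : Type*} [Fintype ι] [DecidableEq ι]
    (L : (ι → ℝ) →L[ℝ] ℝ) (v : ι → ℝ) : L v = ∑ j, v j * L (Pi.single j 1) := by
  conv_lhs => rw [← Finset.univ_sum_single v]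
  rw [map_sum]
  refine Finset.sum_congr rfl fun j _ => ?_
  rw [← smul_eq_mul, ← map_smul, ← Pi.single_smul', smul_eq_mul, mul_one]

lemma fderiv_apply_one_zero {E : Type*} [NormedAddCommGroup E] [NormedSpace ℝ E]
    {f : ℝ × ℝ → E} {μ ν : ℝ} {f' : E} (hf : DifferentiableAt ℝ f (μ, ν))
    (h : HasDerivAt (fun t => f (t, ν)) f' μ) : fderiv ℝ f (μ, ν) (1, 0) = f' :=
  (hf.hasFDerivAt.comp_hasDerivAt μ ((hasDerivAt_id μ).prodMk (hasDerivAt_const μ ν))).unique h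

lemma fderiv_apply_zero_one {E : Type*} [NormedAddCommGroup E] [NormedSpace ℝ E]
    {f : ℝ × ℝ → E} {μ ν : ℝ} {f' : E} (hf : DifferentiableAt ℝ f (μ, ν))
    (h : HasDerivAt (fun t => f (μ, t)) f' ν) : fderiv ℝ f (μ, ν) (0, 1) = f' :=
  (hf.hasFDerivAt.comp_hasDerivAt ν ((hasDerivAt_const ν μ).prodMk (hasDerivAt_id ν))).unique h

lemma integral_integral_finsetSum {ι E : Type*} [NormedAddCommGroup E] [NormedSpace ℝ E]
    {s : Finset ι} {f : ι → ℝ × ℝ → E} (hf : ∀ i ∈ s, Continuous (f i)) (a₁ b₁ a₂ b₂ : ℝ) :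
    ∫ x in a₁..b₁, ∫ y in a₂..b₂, ∑ i ∈ s, f i (x, y) =
      ∑ i ∈ s, ∫ x in a₁..b₁, ∫ y in a₂..b₂, f i (x, y) := by
  have hx : ∀ i ∈ s, Continuous fun x => ∫ y in a₂..b₂, f i (x, y) := fun i hi => by
    have := hf i hi; fun_prop
  rw [← intervalIntegral.integral_finsetSum fun i hi => (hx i hi).intervalIntegrable _ _]
  refine intervalIntegral.integral_congr fun x _ => intervalIntegral.integral_finsetSum
    fun i hi => ?_
  have := hf i hi
  exact Continuous.intervalIntegrable (by fun_prop) _ _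

section
variable {N : ℕ} {A : Vec N → Vec N}

def oneForm (A : Vec N → Vec N) (v x : Vec N) : ℝ :=
  ∑ k, v k * A x k

lemma oneForm_add_smul (u v : Vec N) (t : ℝ) (x : Vec N) :
    oneForm A (u + t • v) x = oneForm A u x + t * oneForm A v x := by
  simp only [oneForm, Pi.add_apply, Pi.smul_apply, smul_eq_mul, add_mul, mul_assoc,
    Finset.sum_add_distrib, Finset.mul_sum]

lemma oneForm_neg (v x : Vec N) : oneForm A (-v) x = -oneForm A v x := by
  simp [oneForm]

lemma hasFDerivAt_oneForm {x : Vec N} (hA : DifferentiableAt ℝ A x) (v : Vec N) :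
    HasFDerivAt (oneForm A v) (∑ k, v k • fderiv ℝ (fun y => A y k) x) x :=
  HasFDerivAt.fun_sum fun k _ => ((differentiableAt_pi.1 hA k).hasFDerivAt).const_mul (v k)

lemma sum_sum_mul_Bof {x : Vec N} (hA : DifferentiableAt ℝ A x) (u v : Vec N) :
    ∑ j, ∑ k, u j * v k * Bof A j k x =
      fderiv ℝ (oneForm A v) x u - fderiv ℝ (oneForm A u) x v := by
  simp only [(hasFDerivAt_oneForm hA _).fderiv, FunLike.coe_sum, Finset.sum_apply,
    FunLike.coe_smul, Pi.smul_apply, smul_eq_mul, Bof]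
  simp only [ContinuousLinearMap.apply_eq_sum_mul_apply_single _ u,
    ContinuousLinearMap.apply_eq_sum_mul_apply_single _ v, Finset.mul_sum, mul_sub,
    Finset.sum_sub_distrib]
  rw [Finset.sum_comm (γ := Fin N)]
  congr 1 <;> exact Finset.sum_congr rfl fun _ _ => Finset.sum_congr rfl fun _ _ => by ring

lemma circA_eq (x y : Vec N) :
    circA A x y = ∫ s in (0:ℝ)..1, oneForm A (y - x) (x + s • (y - x)) := rfl

lemma circA_swap (x y : Vec N) : circA A y x = -circA A x y := by
  have h : ∀ s : ℝ, y + s • (x - y) = x + (1 - s) • (y - x) := fun s => by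
    rw [sub_smul, one_smul, smul_sub, smul_sub]; abel
  calc circA A y x = ∫ s in (0:ℝ)..1, -oneForm A (y - x) (x + (1 - s) • (y - x)) := by
        simp only [circA_eq, h, ← oneForm_neg, neg_sub]
    _ = -circA A x y := by
        rw [intervalIntegral.integral_neg, circA_eq, intervalIntegral.integral_comp_sub_left
          (fun s => oneForm A (y - x) (x + s • (y - x)))]
        norm_num

def triangleParam (a b c : Vec N) (p : ℝ × ℝ) : Vec N :=
  a + p.1 • (b - a) + (p.1 * p.2) • (c - b)

lemma contDiff_triangleParam (a b c : Vec N) : ContDiff ℝ ⊤ (triangleParam a b c) := by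
  unfold triangleParam; fun_prop

lemma hasDerivAt_triangleParam_fst (a b c : Vec N) (μ ν : ℝ) :
    HasDerivAt (fun t => triangleParam a b c (t, ν)) (b - a + ν • (c - b)) μ := by
  have := (((hasDerivAt_id μ).smul_const (b - a)).const_add a).fun_add
    (((hasDerivAt_id μ).mul_const ν).smul_const (c - b))
  simpa [triangleParam] using this

lemma hasDerivAt_triangleParam_snd (a b c : Vec N) (μ ν : ℝ) :
    HasDerivAt (fun t => triangleParam a b c (μ, t)) (μ • (c - b)) ν := by
  have := (((hasDerivAt_id ν).const_mul μ).smul_const (c - b)).const_add (a + μ • (b - a))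
  simpa [triangleParam] using this

lemma fluxB_eq_integral_integral {B : Fin N → Fin N → Vec N → ℝ}
    (hB : ∀ j k, Continuous (B j k)) (a b c : Vec N) :
    fluxB B a b c = ∫ μ in (0:ℝ)..1, ∫ ν in (0:ℝ)..1,
      μ * ∑ j, ∑ k, (b j - a j) * (c k - b k) * B j k (triangleParam a b c (μ, ν)) := by
  have hφ := (contDiff_triangleParam a b c).continuous
  have hcont : ∀ j k, Continuous fun p : ℝ × ℝ =>
      (b j - a j) * (c k - b k) * (p.1 * B j k (triangleParam a b c p)) := fun j k => by
    have := hB j k; fun_prop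
  rw [fluxB]
  conv_rhs => simp only [Finset.mul_sum, mul_left_comm _ ((_ : ℝ) * _)]
  rw [integral_integral_finsetSum (fun j _ => continuous_finsetSum _ fun k _ => hcont j k)]
  simp only [integral_integral_finsetSum (fun k _ => hcont _ k),
    intervalIntegral.integral_const_mul]
  rfl

/-- The pullback of `∑ₖ Aₖ dxₖ` along `triangleParam a b c` is
`pullbackCoeffFst A a b c dμ + pullbackCoeffSnd A a b c dν`. -/
def pullbackCoeffFst (A : Vec N → Vec N) (a b c : Vec N) (p : ℝ × ℝ) : ℝ :=
  oneForm A (b - a + p.2 • (c - b)) (triangleParam a b c p)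

def pullbackCoeffSnd (A : Vec N → Vec N) (a b c : Vec N) (p : ℝ × ℝ) : ℝ :=
  p.1 * oneForm A (c - b) (triangleParam a b c p)

lemma differentiable_pullbackCoeffFst (hA : Differentiable ℝ A) (a b c : Vec N) :
    Differentiable ℝ (pullbackCoeffFst A a b c) := by
  have := differentiable_pi.1 hA
  have := (contDiff_triangleParam a b c).differentiable (by simp)
  unfold pullbackCoeffFst oneForm
  fun_prop

lemma differentiable_pullbackCoeffSnd (hA : Differentiable ℝ A) (a b c : Vec N) :
    Differentiable ℝ (pullbackCoeffSnd A a b c) := by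
  have := differentiable_pi.1 hA
  have := (contDiff_triangleParam a b c).differentiable (by simp)
  unfold pullbackCoeffSnd oneForm
  fun_prop

lemma hasDerivAt_pullbackCoeffFst_snd (hA : Differentiable ℝ A) (a b c : Vec N) (μ ν : ℝ) :
    HasDerivAt (fun t => pullbackCoeffFst A a b c (μ, t))
      (fderiv ℝ (oneForm A (b - a)) (triangleParam a b c (μ, ν)) (μ • (c - b)) +
        (oneForm A (c - b) (triangleParam a b c (μ, ν)) +
          ν * fderiv ℝ (oneForm A (c - b)) (triangleParam a b c (μ, ν)) (μ • (c - b)))) ν := by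
  have hφ := hasDerivAt_triangleParam_snd a b c μ ν
  have hD : ∀ v, HasDerivAt (fun t => oneForm A v (triangleParam a b c (μ, t)))
      (fderiv ℝ (oneForm A v) (triangleParam a b c (μ, ν)) (μ • (c - b))) ν := fun v =>
    (hasFDerivAt_oneForm (hA _) v).differentiableAt.hasFDerivAt.comp_hasDerivAt ν hφ
  simp only [pullbackCoeffFst, oneForm_add_smul]
  exact (hD _).add (((hasDerivAt_id ν).mul (hD _)).congr_deriv (by simp))

lemma hasDerivAt_pullbackCoeffSnd_fst (hA : Differentiable ℝ A) (a b c : Vec N) (μ ν : ℝ) :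
    HasDerivAt (fun t => pullbackCoeffSnd A a b c (t, ν))
      (oneForm A (c - b) (triangleParam a b c (μ, ν)) +
        μ * fderiv ℝ (oneForm A (c - b)) (triangleParam a b c (μ, ν)) (b - a + ν • (c - b))) μ := by
  have hD := (hasFDerivAt_oneForm (hA _) (c - b)).differentiableAt.hasFDerivAt.comp_hasDerivAt μ
    (hasDerivAt_triangleParam_fst a b c μ ν)
  exact ((hasDerivAt_id μ).mul hD).congr_deriv (by simp)

lemma fderiv_pullbackCoeffSnd_sub_fderiv_pullbackCoeffFst (hA : Differentiable ℝ A)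
    (a b c : Vec N) (μ ν : ℝ) :
    fderiv ℝ (pullbackCoeffSnd A a b c) (μ, ν) (1, 0) -
        fderiv ℝ (pullbackCoeffFst A a b c) (μ, ν) (0, 1) =
      μ * ∑ j, ∑ k, (b j - a j) * (c k - b k) * Bof A j k (triangleParam a b c (μ, ν)) := by
  rw [fderiv_apply_one_zero (differentiable_pullbackCoeffSnd hA a b c _)
      (hasDerivAt_pullbackCoeffSnd_fst hA a b c μ ν),
    fderiv_apply_zero_one (differentiable_pullbackCoeffFst hA a b c _)
      (hasDerivAt_pullbackCoeffFst_snd hA a b c μ ν)]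
  rw [show ∑ j, ∑ k, (b j - a j) * (c k - b k) * Bof A j k (triangleParam a b c (μ, ν)) = _ from
    sum_sum_mul_Bof (hA _) (b - a) (c - b)]
  simp only [map_add, map_smul, smul_eq_mul]
  ring

lemma continuous_Bof (hA : ContDiff ℝ 1 A) (j k : Fin N) : Continuous (Bof A j k) :=
  (((contDiff_pi.1 hA k).continuous_fderiv one_ne_zero).clm_apply continuous_const).sub
    (((contDiff_pi.1 hA j).continuous_fderiv one_ne_zero).clm_apply continuous_const)

lemma circA_add_circA_sub_circA_eq_integral (hA : Differentiable ℝ A)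
    (hB : ∀ j k, Continuous (Bof A j k)) (a b c : Vec N) :
    circA A a b + circA A b c - circA A a c =
      ∫ μ in (0:ℝ)..1, ∫ ν in (0:ℝ)..1,
        μ * ∑ j, ∑ k, (b j - a j) * (c k - b k) * Bof A j k (triangleParam a b c (μ, ν)) := by
  set P := pullbackCoeffFst A a b c
  set Q := pullbackCoeffSnd A a b c
  have hP := differentiable_pullbackCoeffFst hA a b c
  have hQ := differentiable_pullbackCoeffSnd hA a b c
  have hcurl : ∀ p : ℝ × ℝ, fderiv ℝ Q p (1, 0) + (-fderiv ℝ P) p (0, 1) =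
      p.1 * ∑ j, ∑ k, (b j - a j) * (c k - b k) * Bof A j k (triangleParam a b c p) := fun p =>
    (sub_eq_add_neg _ _).symm.trans
      (fderiv_pullbackCoeffSnd_sub_fderiv_pullbackCoeffFst hA a b c p.1 p.2)
  have hint : Continuous fun p : ℝ × ℝ =>
      p.1 * ∑ j, ∑ k, (b j - a j) * (c k - b k) * Bof A j k (triangleParam a b c p) := by
    have := (contDiff_triangleParam a b c).continuous
    fun_prop
  have hsquare : IsCompact (Set.uIcc (0:ℝ) 1 ×ˢ Set.uIcc (0:ℝ) 1) :=
    isCompact_uIcc.prod isCompact_uIcc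
  have green := integral2_divergence_prod_of_hasFDerivAt_off_countable Q (-P) (fderiv ℝ Q)
    (-fderiv ℝ P) 0 0 1 1 ∅ Set.countable_empty hQ.continuous.continuousOn
    hP.continuous.neg.continuousOn (fun p _ => (hQ p).hasFDerivAt)
    (fun p _ => (hP p).hasFDerivAt.neg)
    (by simpa only [hcurl] using hint.continuousOn.integrableOn_compact (μ := volume) hsquare)
  have hP1 : ∀ x, P (x, 1) = oneForm A (c - a) (a + x • (c - a)) := fun x => by
    simp only [P, pullbackCoeffFst, triangleParam]; congr 1 <;> module
  have hP0 : ∀ x, P (x, 0) = oneForm A (b - a) (a + x • (b - a)) := fun x => by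
    simp [P, pullbackCoeffFst, triangleParam]
  have hQ1 : ∀ y, Q (1, y) = oneForm A (c - b) (b + y • (c - b)) := fun y => by
    simp only [Q, pullbackCoeffSnd, triangleParam, one_mul, one_smul]; congr 1; abel
  have hQ0 : ∀ y, Q (0, y) = 0 := fun y => by simp [Q, pullbackCoeffSnd]
  simp only [hcurl] at green
  simp only [Pi.neg_apply, hP1, hP0, hQ1, hQ0, intervalIntegral.integral_neg,
    intervalIntegral.integral_zero] at green
  rw [green, circA_eq, circA_eq, circA_eq]
  ring

end

/-- Stokes' theorem for triangles: the circulation of a `C¹` vector potential `A` around the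
boundary of the triangle `⟨a,b,c⟩` equals the flux of `B = dA` through it. -/
theorem circulation_eq_flux {N : ℕ} (A : Vec N → Vec N) (hA : ContDiff ℝ 1 A)
    (a b c : Vec N) :
    circA A a b + circA A b c + circA A c a = fluxB (Bof A) a b c := by
  have hB := continuous_Bof hA
  rw [fluxB_eq_integral_integral hB, ← circA_add_circA_sub_circA_eq_integral
    (hA.differentiable one_ne_zero) hB, circA_swap c a]
  ring

end
end

section
/- Let A : ℝ^N → ℝ^N be a C¹ vector potential with B_{jk} := ∂_j A_k − ∂_k A_j, let ℏ ∈ (0,1], let v ∈ L²(ℝ^N), and let Y = (y,η), Z = (z,ζ) ∈ ℝ^N × ℝ^N. Then |⟨v^A_ℏ(Z), v^A_ℏ(Y)⟩_{L²}| = | ∫_{ℝ^N} e^{i t·(η−ζ)/√ℏ} e^{-(i/ℏ) Γ^B⟨z + √ℏ t, y, z⟩} conj(v(t)) v(t + (z−y)/√ℏ) dt |. -/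
open MeasureTheory Filter Topology Real

noncomputable section

/-- The magnetic coherent vector `v^A_ℏ(Z)`, as a function on `ℝ^N`:
`[v^A_ℏ(Z)](x) = ℏ^{-N/4} e^{(i/ℏ)(x-z/2)·ζ} e^{(i/ℏ)Γ^A[z,x]} v((x-z)/√ℏ)`. -/
def cohVec {N : ℕ} (A : Vec N → Vec N) (ℏ : ℝ) (v : Vec N → ℂ) (Z : Vec N × Vec N) :
    Vec N → ℂ :=
  fun x => (ℏ ^ (-(N:ℝ)/4) : ℝ) *
    Complex.exp (Complex.I / (ℏ:ℂ) * ((∑ j, (x j - Z.1 j / 2) * Z.2 j : ℝ) : ℂ)) *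
    Complex.exp (Complex.I / (ℏ:ℂ) * ((circA A Z.1 x : ℝ) : ℂ)) *
    v ((Real.sqrt ℏ)⁻¹ • (x - Z.1))

/-- The `L²` inner product `⟨f,g⟩ = ∫ conj(f) g`, conjugate-linear in the first variable. -/
def l2inner {N : ℕ} (f g : Vec N → ℂ) : ℂ :=
  ∫ x : Vec N, (starRingEnd ℂ) (f x) * g x

/-!
Substituting `x = z + √ℏ t` in the overlap integral, the Jacobian `ℏ^{N/2}` cancels the
normalisation `ℏ^{-N/2}`, and the phases of the two coherent vectors combine into a constant, the
plane wave `e^{i t·(η-ζ)/√ℏ}`, and the difference of circulations `Γ^A[y,x] - Γ^A[z,x]`.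
Stokes' theorem for the triangle `(x, y, z)` turns this difference into the constant `Γ^A[y,z]`
minus the flux `Γ^B⟨x,y,z⟩`; constant phases drop out of the modulus.

Stokes' theorem is Green's theorem on the unit square for the pullback of `A · dx` under the
parametrization of the triangle used in `Γ^B`, whose side `μ = 0` collapses to a vertex.
-/

def dotProductCLM {ι : Type*} [Fintype ι] (w : ι → ℝ) : (ι → ℝ) →L[ℝ] ℝ :=
  LinearMap.toContinuousLinearMap (dotProductBilin ℝ ℝ w)

@[simp]
lemma dotProductCLM_apply {ι : Type*} [Fintype ι] (w u : ι → ℝ) : dotProductCLM w u = w ⬝ᵥ u :=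
  rfl

lemma integral_eq_smul_integral_comp_add_smul {E F : Type*} [NormedAddCommGroup E]
    [NormedSpace ℝ E] [MeasurableSpace E] [BorelSpace E] [FiniteDimensional ℝ E]
    (μ : Measure E) [μ.IsAddHaarMeasure] [NormedAddCommGroup F] [NormedSpace ℝ F]
    (f : E → F) (z : E) {c : ℝ} (hc : 0 < c) :
    ∫ x, f x ∂μ = c ^ Module.finrank ℝ E • ∫ t, f (z + c • t) ∂μ := by
  rw [Measure.integral_comp_smul_of_nonneg μ (fun x => f (z + x)) c (hR := hc.le),
    integral_add_left_eq_self, smul_smul, mul_inv_cancel₀ (by positivity), one_smul]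

lemma integral_integral_finsetSum_of_continuous {ι : Type*} (s : Finset ι) {F : ι → ℝ → ℝ → ℝ}
    (hF : ∀ i ∈ s, Continuous (Function.uncurry (F i))) (a₁ b₁ a₂ b₂ : ℝ) :
    ∫ x in a₁..b₁, ∫ y in a₂..b₂, ∑ i ∈ s, F i x y =
      ∑ i ∈ s, ∫ x in a₁..b₁, ∫ y in a₂..b₂, F i x y := by
  have hsection : ∀ i ∈ s, ∀ x, Continuous (F i x) := fun i hi x =>
    (hF i hi).comp (continuous_const.prodMk continuous_id)
  calc ∫ x in a₁..b₁, ∫ y in a₂..b₂, ∑ i ∈ s, F i x y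
      = ∫ x in a₁..b₁, ∑ i ∈ s, ∫ y in a₂..b₂, F i x y :=
        intervalIntegral.integral_congr fun x _ => intervalIntegral.integral_finsetSum
          fun i hi => (hsection i hi x).intervalIntegrable _ _
    _ = ∑ i ∈ s, ∫ x in a₁..b₁, ∫ y in a₂..b₂, F i x y :=
        intervalIntegral.integral_finsetSum fun i hi =>
          (intervalIntegral.continuous_parametric_intervalIntegral_of_continuous' (hF i hi) _ _
            ).intervalIntegrable _ _

section VectorPotential

variable {N : ℕ} {A : Vec N → Vec N}

lemma circA_eq_integral_dotProduct (x y : Vec N) :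
    circA A x y = ∫ s in (0:ℝ)..1, (y - x) ⬝ᵥ A (x + s • (y - x)) := rfl

lemma circA_self (x : Vec N) : circA A x x = 0 := by
  simp [circA]

lemma Bof_eq_fderiv {x : Vec N} (hA : DifferentiableAt ℝ A x) (j k : Fin N) :
    Bof A j k x = fderiv ℝ A x (Pi.single j 1) k - fderiv ℝ A x (Pi.single k 1) j := by
  simp [Bof, fderiv_apply hA]

lemma dotProduct_apply_eq_sum_sum {ι : Type*} [Fintype ι] [DecidableEq ι]
    (D : (ι → ℝ) →L[ℝ] (ι → ℝ)) (u w : ι → ℝ) :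
    w ⬝ᵥ D u = ∑ j, ∑ k, u j * w k * D (Pi.single j 1) k := by
  conv_lhs => rw [pi_eq_sum_univ' u]
  simp only [map_sum, map_smul, dotProduct, Finset.sum_apply, Pi.smul_apply, smul_eq_mul,
    Finset.mul_sum]
  rw [Finset.sum_comm]
  exact Finset.sum_congr rfl fun j _ => Finset.sum_congr rfl fun k _ => by ring

lemma dotProduct_fderiv_sub_dotProduct_fderiv {x : Vec N} (hA : DifferentiableAt ℝ A x)
    (u w : Vec N) :
    w ⬝ᵥ fderiv ℝ A x u - u ⬝ᵥ fderiv ℝ A x w = ∑ j, ∑ k, u j * w k * Bof A j k x := by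
  rw [dotProduct_apply_eq_sum_sum, dotProduct_apply_eq_sum_sum,
    Finset.sum_comm (f := fun j k => w j * u k * _), ← Finset.sum_sub_distrib]
  refine Finset.sum_congr rfl fun j _ => ?_
  rw [← Finset.sum_sub_distrib]
  exact Finset.sum_congr rfl fun k _ => by rw [Bof_eq_fderiv hA]; ring

end VectorPotential

section Stokes

variable {N : ℕ}

/-- The parametrization of the triangle `abc` used in `fluxB`; it collapses the side `μ = 0` of
the unit square to `a`. -/
def triangleMap (a b c : Vec N) (p : ℝ × ℝ) : Vec N := a + p.1 • (b - a) + (p.1 * p.2) • (c - b)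

variable (A : Vec N → Vec N) (a b c : Vec N)

lemma differentiable_triangleMap : Differentiable ℝ (triangleMap a b c) := by
  unfold triangleMap
  fun_prop

lemma fderiv_triangleMap_apply (p h : ℝ × ℝ) :
    fderiv ℝ (triangleMap a b c) p h = h.1 • (b - a + p.2 • (c - b)) + (p.1 * h.2) • (c - b) := by
  have hmul : HasFDerivAt (fun q : ℝ × ℝ => q.1 * q.2)
      (p.1 • ContinuousLinearMap.snd ℝ ℝ ℝ + p.2 • ContinuousLinearMap.fst ℝ ℝ ℝ) p :=
    hasFDerivAt_fst.mul hasFDerivAt_snd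
  have hΦ : HasFDerivAt (triangleMap a b c) _ p :=
    ((hasFDerivAt_fst.smul_const (b - a)).const_add a).add (hmul.smul_const (c - b))
  rw [hΦ.fderiv]
  simp only [add_apply, smul_apply, ContinuousLinearMap.smulRight_apply,
    ContinuousLinearMap.coe_fst', ContinuousLinearMap.coe_snd', smul_eq_mul]
  module

lemma triangleMap_one_left (ν : ℝ) : triangleMap a b c (1, ν) = b + ν • (c - b) := by
  simp only [triangleMap]; module

lemma triangleMap_zero_right (μ : ℝ) : triangleMap a b c (μ, 0) = a + μ • (b - a) := by
  simp [triangleMap]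

lemma triangleMap_one_right (μ : ℝ) : triangleMap a b c (μ, 1) = a + μ • (c - a) := by
  simp only [triangleMap]; module

/- The pullback of the 1-form `A · dx` under `triangleMap a b c` is
`pullbackFst A a b c dμ + pullbackSnd A a b c dν`. -/

def pullbackFst (q : ℝ × ℝ) : ℝ := (b - a + q.2 • (c - b)) ⬝ᵥ A (triangleMap a b c q)

def pullbackSnd (q : ℝ × ℝ) : ℝ := q.1 * ((c - b) ⬝ᵥ A (triangleMap a b c q))

variable {A}

lemma hasFDerivAt_dotProduct_comp_triangleMap (hA : Differentiable ℝ A) (w : Vec N)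
    (p : ℝ × ℝ) :
    HasFDerivAt (fun q => w ⬝ᵥ A (triangleMap a b c q))
      ((dotProductCLM w).comp ((fderiv ℝ A (triangleMap a b c p)).comp
        (fderiv ℝ (triangleMap a b c) p))) p :=
  (dotProductCLM w).hasFDerivAt.comp p
    ((hA _).hasFDerivAt.comp p (differentiable_triangleMap a b c p).hasFDerivAt)

lemma fderiv_pullbackSnd_sub_fderiv_pullbackFst (hA : Differentiable ℝ A) (p : ℝ × ℝ) :
    fderiv ℝ (pullbackSnd A a b c) p (1, 0) - fderiv ℝ (pullbackFst A a b c) p (0, 1) =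
      p.1 * ∑ j, ∑ k, (b j - a j) * (c k - b k) * Bof A j k (triangleMap a b c p) := by
  set e := fun w q => w ⬝ᵥ A (triangleMap a b c q)
  have hdot := hasFDerivAt_dotProduct_comp_triangleMap a b c hA (p := p)
  have hsplit : pullbackFst A a b c = fun q => e (b - a) q + q.2 * e (c - b) q := by
    funext q; simp only [e, pullbackFst, add_dotProduct, smul_dotProduct, smul_eq_mul]
  have hFst : HasFDerivAt (fun q => e (b - a) q + q.2 * e (c - b) q) _ p :=
    (hdot (b - a)).add (hasFDerivAt_snd.mul (hdot (c - b)))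
  have hSnd : HasFDerivAt (pullbackSnd A a b c) _ p := hasFDerivAt_fst.mul (hdot (c - b))
  have hcurl : (c - b) ⬝ᵥ fderiv ℝ A (triangleMap a b c p) (b - a)
      - (b - a) ⬝ᵥ fderiv ℝ A (triangleMap a b c p) (c - b)
      = ∑ j, ∑ k, (b j - a j) * (c k - b k) * Bof A j k (triangleMap a b c p) :=
    dotProduct_fderiv_sub_dotProduct_fderiv (hA _) _ _
  -- the `p.2 • (c - b)` part of `∂_μ Φ` cancels against `∂_ν Φ = p.1 • (c - b)`
  rw [hsplit, hFst.fderiv, hSnd.fderiv, ← hcurl]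
  simp only [add_apply, smul_apply, ContinuousLinearMap.coe_comp, Function.comp_apply,
    fderiv_triangleMap_apply, dotProductCLM_apply, ContinuousLinearMap.coe_fst',
    ContinuousLinearMap.coe_snd', one_smul, zero_smul, mul_zero, mul_one, zero_add, add_zero,
    map_add, map_smul, smul_eq_mul]
  ring

lemma fluxB_Bof_eq_integral_integral (hA : ContDiff ℝ 1 A) :
    fluxB (Bof A) a b c = ∫ x in (0:ℝ)..1, ∫ y in (0:ℝ)..1,
      ∑ j, ∑ k, (b j - a j) * (c k - b k) * (x * Bof A j k (triangleMap a b c (x, y))) := by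
  have hB := continuous_Bof hA
  rw [integral_integral_finsetSum_of_continuous _ (fun j _ => by unfold triangleMap; fun_prop)]
  refine Finset.sum_congr rfl fun j _ => ?_
  rw [integral_integral_finsetSum_of_continuous _ (fun k _ => by unfold triangleMap; fun_prop)]
  refine Finset.sum_congr rfl fun k _ => ?_
  simp only [intervalIntegral.integral_const_mul]
  rfl

theorem fluxB_Bof_eq_circA (hA : ContDiff ℝ 1 A) :
    fluxB (Bof A) a b c = circA A a b + circA A b c - circA A a c := by
  have hA' := hA.differentiable one_ne_zero
  have hB := continuous_Bof hA
  have hFst : Differentiable ℝ (pullbackFst A a b c) := by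
    unfold pullbackFst triangleMap dotProduct; fun_prop
  have hSnd : Differentiable ℝ (pullbackSnd A a b c) := by
    unfold pullbackSnd triangleMap dotProduct; fun_prop
  have hcurl : ∀ p, fderiv ℝ (pullbackSnd A a b c) p (1, 0)
      + (-fderiv ℝ (pullbackFst A a b c) p) (0, 1)
      = ∑ j, ∑ k, (b j - a j) * (c k - b k) * (p.1 * Bof A j k (triangleMap a b c p)) := by
    intro p
    rw [neg_apply, ← sub_eq_add_neg, fderiv_pullbackSnd_sub_fderiv_pullbackFst a b c hA',
      Finset.mul_sum]
    exact Finset.sum_congr rfl fun j _ => by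
      rw [Finset.mul_sum]; exact Finset.sum_congr rfl fun k _ => by ring
  have hgreen := integral2_divergence_prod_of_hasFDerivAt (pullbackSnd A a b c)
    (fun q => -pullbackFst A a b c q) (fderiv ℝ (pullbackSnd A a b c))
    (fun q => -fderiv ℝ (pullbackFst A a b c) q) 0 0 1 1
    hSnd.continuous.continuousOn hFst.continuous.neg.continuousOn
    (fun p _ => (hSnd p).hasFDerivAt) (fun p _ => (hFst p).hasFDerivAt.neg)
    (by
      simp only [hcurl]
      exact (show Continuous _ by unfold triangleMap; fun_prop).continuousOn.integrableOn_compact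
        (isCompact_uIcc.prod isCompact_uIcc))
  simp only [hcurl, ← fluxB_Bof_eq_integral_integral a b c hA, pullbackFst, pullbackSnd,
    triangleMap_one_right, triangleMap_zero_right, triangleMap_one_left, one_smul, zero_smul,
    add_zero, sub_add_sub_cancel', zero_mul, one_mul, intervalIntegral.integral_zero,
    intervalIntegral.integral_neg, sub_zero, ← circA_eq_integral_dotProduct] at hgreen
  linarith

end Stokes

section CoherentVectors

variable {N : ℕ}

def cohPhase (A : Vec N → Vec N) (Z : Vec N × Vec N) (x : Vec N) : ℝ :=
  ∑ j, (x j - Z.1 j / 2) * Z.2 j + circA A Z.1 x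

lemma cohVec_eq (A : Vec N → Vec N) (ℏ : ℝ) (v : Vec N → ℂ) (Z : Vec N × Vec N) (x : Vec N) :
    cohVec A ℏ v Z x = (ℏ ^ (-(N:ℝ)/4) : ℝ) *
      Complex.exp (Complex.I / (ℏ:ℂ) * (cohPhase A Z x : ℂ)) * v ((√ℏ)⁻¹ • (x - Z.1)) := by
  rw [cohVec, cohPhase, Complex.ofReal_add, mul_add, Complex.exp_add]
  ring

lemma cohPhase_sub_cohPhase {A : Vec N → Vec N} (hA : ContDiff ℝ 1 A) (Y Z : Vec N × Vec N)
    (x : Vec N) :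
    cohPhase A Y x - cohPhase A Z x = cohPhase A Y Z.1 - cohPhase A Z Z.1
      + (x - Z.1) ⬝ᵥ (Y.2 - Z.2) - fluxB (Bof A) x Y.1 Z.1 := by
  have hplane : ∑ j, (x j - Y.1 j / 2) * Y.2 j - ∑ j, (x j - Z.1 j / 2) * Z.2 j
      = ∑ j, (Z.1 j - Y.1 j / 2) * Y.2 j - ∑ j, (Z.1 j - Z.1 j / 2) * Z.2 j
        + (x - Z.1) ⬝ᵥ (Y.2 - Z.2) := by
    simp only [dotProduct, ← Finset.sum_sub_distrib, ← Finset.sum_add_distrib]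
    exact Finset.sum_congr rfl fun j _ => by simp only [Pi.sub_apply]; ring
  have hstokes := fluxB_Bof_eq_circA x Y.1 Z.1 hA
  have hY := circA_swap (A := A) x Y.1
  have hZ := circA_swap (A := A) x Z.1
  simp only [cohPhase, circA_self]
  linarith

lemma conj_exp_I_div_mul (ℏ r : ℝ) :
    (starRingEnd ℂ) (Complex.exp (Complex.I / (ℏ:ℂ) * (r:ℂ)))
      = Complex.exp (-(Complex.I / (ℏ:ℂ) * (r:ℂ))) := by
  rw [← Complex.exp_conj]
  simp [Complex.conj_ofReal, neg_div]

lemma conj_cohVec_mul_cohVec (A : Vec N → Vec N) (ℏ : ℝ) (v : Vec N → ℂ) (Y Z : Vec N × Vec N)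
    (x : Vec N) :
    (starRingEnd ℂ) (cohVec A ℏ v Z x) * cohVec A ℏ v Y x =
      ((ℏ ^ (-(N:ℝ)/4)) ^ 2 : ℝ) *
        Complex.exp (Complex.I / (ℏ:ℂ) * ((cohPhase A Y x - cohPhase A Z x : ℝ) : ℂ)) *
        (starRingEnd ℂ) (v ((√ℏ)⁻¹ • (x - Z.1))) * v ((√ℏ)⁻¹ • (x - Y.1)) := by
  rw [cohVec_eq, cohVec_eq, map_mul, map_mul, Complex.conj_ofReal, conj_exp_I_div_mul,
    Complex.ofReal_sub, mul_sub, Complex.exp_sub, Complex.exp_neg]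
  push_cast
  ring

lemma rpow_neg_div_four_sq {ℏ : ℝ} (hℏ : 0 < ℏ) (n : ℕ) :
    (ℏ ^ (-(n:ℝ)/4)) ^ 2 = (√ℏ ^ n)⁻¹ := by
  rw [← Real.rpow_natCast _ 2, ← Real.rpow_mul hℏ.le, Real.sqrt_eq_rpow, ← Real.rpow_natCast,
    ← Real.rpow_mul hℏ.le, ← Real.rpow_neg hℏ.le]
  ring_nf

lemma sqrt_pow_smul_conj_cohVec_mul_cohVec {A : Vec N → Vec N} (hA : ContDiff ℝ 1 A) {ℏ : ℝ}
    (hℏ : 0 < ℏ) (v : Vec N → ℂ) (Y Z : Vec N × Vec N) (t : Vec N) :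
    (√ℏ ^ N : ℝ) • ((starRingEnd ℂ) (cohVec A ℏ v Z (Z.1 + √ℏ • t)) *
        cohVec A ℏ v Y (Z.1 + √ℏ • t)) =
      Complex.exp (Complex.I / (ℏ:ℂ) * ((cohPhase A Y Z.1 - cohPhase A Z Z.1 : ℝ) : ℂ)) *
        (Complex.exp (Complex.I * (((∑ j, t j * (Y.2 j - Z.2 j)) / √ℏ : ℝ) : ℂ)) *
          Complex.exp (-(Complex.I / (ℏ:ℂ)) * ((fluxB (Bof A) (Z.1 + √ℏ • t) Y.1 Z.1 : ℝ) : ℂ)) *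
          (starRingEnd ℂ) (v t) * v (t + (√ℏ)⁻¹ • (Z.1 - Y.1))) := by
  set s := √ℏ with hs_def
  have hs : 0 < s := Real.sqrt_pos.2 hℏ
  have hs0 : (s:ℂ) ≠ 0 := by exact_mod_cast hs.ne'
  have hs2 : (s:ℂ) ^ 2 = ℏ := by exact_mod_cast Real.sq_sqrt hℏ.le
  have hshift : s⁻¹ • (Z.1 + s • t - Z.1) = t := by
    rw [add_sub_cancel_left, inv_smul_smul₀ hs.ne']
  have hshift' : s⁻¹ • (Z.1 + s • t - Y.1) = t + s⁻¹ • (Z.1 - Y.1) := by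
    rw [add_sub_right_comm, smul_add, inv_smul_smul₀ hs.ne', add_comm]
  have hdrift : (Z.1 + s • t - Z.1) ⬝ᵥ (Y.2 - Z.2) = s * ∑ j, t j * (Y.2 j - Z.2 j) := by
    rw [add_sub_cancel_left, smul_dotProduct, smul_eq_mul]; rfl
  have hphase : ∀ r T Φ : ℝ, Complex.I / (ℏ:ℂ) * ((r + s * T - Φ : ℝ) : ℂ) =
      Complex.I / (ℏ:ℂ) * (r : ℂ) + Complex.I * ((T / s : ℝ) : ℂ)
        + -(Complex.I / (ℏ:ℂ)) * (Φ : ℂ) := by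
    intro r T Φ
    push_cast
    rw [← hs2]
    field_simp
    ring
  rw [conj_cohVec_mul_cohVec, cohPhase_sub_cohPhase hA, hshift, hshift', hdrift, hphase,
    Complex.exp_add, Complex.exp_add, rpow_neg_div_four_sq hℏ, ← hs_def, Complex.real_smul]
  push_cast
  field_simp

end CoherentVectors

theorem coherent_overlap_formula_general {N : ℕ} (A : Vec N → Vec N) (hA : ContDiff ℝ 1 A)
    (ℏ : ℝ) (hℏ : ℏ ∈ Set.Ioc (0:ℝ) 1) (v : Vec N → ℂ)
    (Y Z : Vec N × Vec N) :
    ‖l2inner (cohVec A ℏ v Z) (cohVec A ℏ v Y)‖ =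
      ‖∫ t : Vec N,
        Complex.exp (Complex.I * (((∑ j, t j * (Y.2 j - Z.2 j)) / Real.sqrt ℏ : ℝ) : ℂ)) *
        Complex.exp (-(Complex.I/(ℏ:ℂ)) *
          ((fluxB (Bof A) (Z.1 + Real.sqrt ℏ • t) Y.1 Z.1 : ℝ) : ℂ)) *
        (starRingEnd ℂ) (v t) * v (t + (Real.sqrt ℏ)⁻¹ • (Z.1 - Y.1))‖ := by
  have hunimodular : ∀ r : ℝ, ‖Complex.exp (Complex.I / (ℏ:ℂ) * (r : ℂ))‖ = 1 := by
    intro r; simp [Complex.norm_exp]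
  rw [l2inner, integral_eq_smul_integral_comp_add_smul volume _ Z.1 (Real.sqrt_pos.2 hℏ.1),
    Module.finrank_fin_fun, ← integral_smul]
  simp_rw [sqrt_pow_smul_conj_cohVec_mul_cohVec hA hℏ.1]
  rw [integral_const_mul, norm_mul, hunimodular, one_mul]

/-- The modulus of the overlap of two magnetic coherent vectors is given by an integral
involving only the magnetic field `B = dA`. -/
theorem coherent_overlap_formula {N : ℕ} (A : Vec N → Vec N) (hA : ContDiff ℝ 1 A)
    (ℏ : ℝ) (hℏ : ℏ ∈ Set.Ioc (0:ℝ) 1) (v : Vec N → ℂ)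
    (hv : MemLp v 2 (volume : Measure (Vec N))) (Y Z : Vec N × Vec N) :
    ‖l2inner (cohVec A ℏ v Z) (cohVec A ℏ v Y)‖ =
      ‖∫ t : Vec N,
        Complex.exp (Complex.I * (((∑ j, t j * (Y.2 j - Z.2 j)) / Real.sqrt ℏ : ℝ) : ℂ)) *
        Complex.exp (-(Complex.I/(ℏ:ℂ)) *
          ((fluxB (Bof A) (Z.1 + Real.sqrt ℏ • t) Y.1 Z.1 : ℝ) : ℂ)) *
        (starRingEnd ℂ) (v t) * v (t + (Real.sqrt ℏ)⁻¹ • (Z.1 - Y.1))‖ :=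
  coherent_overlap_formula_general A hA ℏ hℏ v Y Z

end
end

section
/- Let B_{jk} : ℝ^N → ℝ be bounded continuous functions with B_{jk} = −B_{kj}, and fix z ∈ ℝ^N. For ℏ ∈ (0,1] and x, y ∈ ℝ^N set φ_ℏ(z;x,y) := e^{-(i/ℏ) Γ^B⟨z, z + √ℏ x, z + √ℏ (x−y)⟩}. Then, locally uniformly in (x,y) ∈ ℝ^N × ℝ^N, one has lim_{ℏ→0⁺} φ_ℏ(z;x,y) = exp( (i/2) Σ_{j,k} x_j y_k B_{jk}(z) ), and also lim_{ℏ→0⁺} φ_ℏ(z;x,√ℏ y) = 1. -/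
open MeasureTheory Filter Topology Real

noncomputable section

/-! Putting `b - a = √ℏ x` and `c - b = -√ℏ y` into the flux pulls out the factor `-ℏ`, so the
phase factor is `exp (i G(√ℏ, x, y))` with `G = rescaledFlux B z`,
`G(s, x, y) = ∑ x_j y_k ∫∫ μ B_jk(z + μ s x - μ ν s y)`, a jointly continuous function of
`(s, x, y)`. A jointly continuous family converges locally uniformly to its value at `s = 0`,
and `∫∫ μ = 1/2` gives the first limit. The second phase factor is `exp (i G(√ℏ, x, √ℏ y))`,
whose value at `ℏ = 0` is `1`. -/

section LocallyUniform

variable {ι κ α β γ : Type*} [TopologicalSpace α] [TopologicalSpace β] [UniformSpace γ]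

theorem Continuous.tendstoLocallyUniformly [WeaklyLocallyCompactSpace β] {F : α → β → γ}
    (hF : Continuous ↿F) (x : α) : TendstoLocallyUniformly F (F x) (𝓝 x) := by
  intro u hu y
  obtain ⟨K, hK, hyK⟩ := exists_compact_mem_nhds y
  obtain ⟨v, hv, hvK⟩ :=
    hK.mem_uniformity_of_prod hF.continuousOn (Set.mem_univ x) (symm_le_uniformity hu)
  rw [nhdsWithin_univ] at hv
  exact ⟨K, hyK, Filter.mem_of_superset hv hvK⟩

theorem TendstoLocallyUniformly.comp_tendsto {F : ι → β → γ} {f : β → γ} {p : Filter ι}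
    (h : TendstoLocallyUniformly F f p) {g : κ → ι} {q : Filter κ} (hg : Tendsto g q p) :
    TendstoLocallyUniformly (F ∘ g) f q := fun u hu y =>
  (h u hu y).imp fun _ ⟨ht, hev⟩ => ⟨ht, hg.eventually hev⟩

theorem Continuous.tendstoLocallyUniformly_sqrt [WeaklyLocallyCompactSpace β] {F : ℝ → β → γ}
    (hF : Continuous ↿F) : TendstoLocallyUniformly (fun ℏ => F √ℏ) (F 0) (𝓝[>] 0) := by
  have hsqrt : Tendsto Real.sqrt (𝓝[>] 0) (𝓝 0) := by
    simpa using (continuous_sqrt.tendsto 0).mono_left nhdsWithin_le_nhds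
  exact (hF.tendstoLocallyUniformly 0).comp_tendsto hsqrt

end LocallyUniform

section TriangleIntegral

variable {E : Type*} [NormedAddCommGroup E] [NormedSpace ℝ E]

def triangleIntegral (f : E → ℝ) (a u v : E) : ℝ :=
  ∫ μ in (0:ℝ)..1, ∫ ν in (0:ℝ)..1, μ * f (a + μ • u + (μ * ν) • v)

theorem triangleIntegral_zero_zero (f : E → ℝ) (a : E) : triangleIntegral f a 0 0 = f a / 2 := by
  simp [triangleIntegral, intervalIntegral.integral_mul_const, integral_id, div_eq_inv_mul]

@[fun_prop]
theorem Continuous.triangleIntegral {X : Type*} [TopologicalSpace X] {f : E → ℝ}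
    (hf : Continuous f) {a u v : X → E} (ha : Continuous a) (hu : Continuous u)
    (hv : Continuous v) : Continuous fun x => triangleIntegral f (a x) (u x) (v x) := by
  unfold _root_.triangleIntegral
  fun_prop

end TriangleIntegral

section RescaledFlux

variable {N : ℕ}

def rescaledFlux (B : Fin N → Fin N → Vec N → ℝ) (z : Vec N) (s : ℝ) (p : Vec N × Vec N) : ℝ :=
  ∑ j, ∑ k, p.1 j * p.2 k * triangleIntegral (B j k) z (s • p.1) (-(s • p.2))

theorem fluxB_eq_sum_triangleIntegral (B : Fin N → Fin N → Vec N → ℝ) (a b c : Vec N) :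
    fluxB B a b c =
      ∑ j, ∑ k, (b j - a j) * (c k - b k) * triangleIntegral (B j k) a (b - a) (c - b) :=
  rfl

theorem fluxB_eq_neg_sq_mul_rescaledFlux (B : Fin N → Fin N → Vec N → ℝ) (z x y : Vec N)
    (s : ℝ) :
    fluxB B z (z + s • x) (z + s • (x - y)) = -(s ^ 2 * rescaledFlux B z s (x, y)) := by
  have hu : z + s • x - z = s • x := by abel
  have hv : z + s • (x - y) - (z + s • x) = -(s • y) := by module
  rw [fluxB_eq_sum_triangleIntegral, hu, hv, rescaledFlux, Finset.mul_sum,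
    ← Finset.sum_neg_distrib]
  refine Finset.sum_congr rfl fun j _ => ?_
  rw [Finset.mul_sum, ← Finset.sum_neg_distrib]
  refine Finset.sum_congr rfl fun k _ => ?_
  simp only [Pi.add_apply, Pi.sub_apply, Pi.smul_apply, smul_eq_mul]
  ring

theorem rescaledFlux_zero (B : Fin N → Fin N → Vec N → ℝ) (z : Vec N) (p : Vec N × Vec N) :
    rescaledFlux B z 0 p = (∑ j, ∑ k, p.1 j * p.2 k * B j k z) / 2 := by
  simp only [rescaledFlux, zero_smul, neg_zero, triangleIntegral_zero_zero, Finset.sum_div]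
  refine Finset.sum_congr rfl fun j _ => Finset.sum_congr rfl fun k _ => ?_
  ring

@[fun_prop]
theorem Continuous.rescaledFlux {B : Fin N → Fin N → Vec N → ℝ} (hB : ∀ j k, Continuous (B j k))
    (z : Vec N) {X : Type*} [TopologicalSpace X] {s : X → ℝ} {p : X → Vec N × Vec N}
    (hs : Continuous s) (hp : Continuous p) :
    Continuous fun x => rescaledFlux B z (s x) (p x) := by
  unfold _root_.rescaledFlux
  fun_prop

end RescaledFlux

theorem phase_factor_limits_general {N : ℕ} (B : Fin N → Fin N → Vec N → ℝ)
    (hBcont : ∀ j k, Continuous (B j k))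
    (z : Vec N) :
    TendstoLocallyUniformly
      (fun (ℏ : ℝ) (p : Vec N × Vec N) =>
        Complex.exp (-(Complex.I/(ℏ:ℂ)) *
          ((fluxB B z (z + Real.sqrt ℏ • p.1) (z + Real.sqrt ℏ • (p.1 - p.2)) : ℝ) : ℂ)))
      (fun p : Vec N × Vec N =>
        Complex.exp (Complex.I/2 * ((∑ j, ∑ k, p.1 j * p.2 k * B j k z : ℝ) : ℂ)))
      (𝓝[>] 0)
    ∧
    TendstoLocallyUniformly
      (fun (ℏ : ℝ) (p : Vec N × Vec N) =>
        Complex.exp (-(Complex.I/(ℏ:ℂ)) *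
          ((fluxB B z (z + Real.sqrt ℏ • p.1)
            (z + Real.sqrt ℏ • (p.1 - Real.sqrt ℏ • p.2)) : ℝ) : ℂ)))
      (fun _ : Vec N × Vec N => 1)
      (𝓝[>] 0) := by
  have hphase : ∀ ℏ > (0 : ℝ), ∀ x y : Vec N,
      -(Complex.I / (ℏ : ℂ)) * ((fluxB B z (z + √ℏ • x) (z + √ℏ • (x - y)) : ℝ) : ℂ) =
        Complex.I * (rescaledFlux B z √ℏ (x, y) : ℂ) := by
    intro ℏ hℏ x y
    rw [fluxB_eq_neg_sq_mul_rescaledFlux, sq_sqrt hℏ.le]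
    push_cast
    field_simp [ne_of_gt hℏ]
  constructor
  · have hlim : Continuous ↿fun s (p : Vec N × Vec N) =>
        Complex.exp (Complex.I * (rescaledFlux B z s p : ℂ)) := by
      fun_prop (disch := exact hBcont)
    refine (hlim.tendstoLocallyUniformly_sqrt.congr_inseparable ?_).congr_right fun p => ?_
    · filter_upwards [self_mem_nhdsWithin] with ℏ hℏ p
      rw [hphase ℏ hℏ]
    · rw [rescaledFlux_zero]
      push_cast
      ring_nf
  · have hlim : Continuous ↿fun s (p : Vec N × Vec N) =>
        Complex.exp (Complex.I * (rescaledFlux B z s (p.1, s • p.2) : ℂ)) := by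
      fun_prop (disch := exact hBcont)
    refine (hlim.tendstoLocallyUniformly_sqrt.congr_inseparable ?_).congr_right fun p => ?_
    · filter_upwards [self_mem_nhdsWithin] with ℏ hℏ p
      rw [hphase ℏ hℏ]
    · simp [rescaledFlux_zero]

/-- Locally uniform limits of the magnetic phase factor
`φ_ℏ(z;x,y) = e^{-(i/ℏ)Γ^B⟨z, z+√ℏ x, z+√ℏ(x-y)⟩}` as `ℏ → 0⁺`. -/
theorem phase_factor_limits {N : ℕ} (B : Fin N → Fin N → Vec N → ℝ)
    (hBanti : ∀ j k x, B j k x = - B k j x)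
    (hBcont : ∀ j k, Continuous (B j k))
    (hBbound : ∀ j k, ∃ C : ℝ, ∀ x, |B j k x| ≤ C)
    (z : Vec N) :
    TendstoLocallyUniformly
      (fun (ℏ : ℝ) (p : Vec N × Vec N) =>
        Complex.exp (-(Complex.I/(ℏ:ℂ)) *
          ((fluxB B z (z + Real.sqrt ℏ • p.1) (z + Real.sqrt ℏ • (p.1 - p.2)) : ℝ) : ℂ)))
      (fun p : Vec N × Vec N =>
        Complex.exp (Complex.I/2 * ((∑ j, ∑ k, p.1 j * p.2 k * B j k z : ℝ) : ℂ)))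
      (𝓝[>] 0)
    ∧
    TendstoLocallyUniformly
      (fun (ℏ : ℝ) (p : Vec N × Vec N) =>
        Complex.exp (-(Complex.I/(ℏ:ℂ)) *
          ((fluxB B z (z + Real.sqrt ℏ • p.1)
            (z + Real.sqrt ℏ • (p.1 - Real.sqrt ℏ • p.2)) : ℝ) : ℂ)))
      (fun _ : Vec N × Vec N => 1)
      (𝓝[>] 0) :=
  phase_factor_limits_general B hBcont z

end
end

section
/- Let B_{jk} : ℝ^N → ℝ (j,k = 1,…,N) be smooth functions with B_{jk} = −B_{kj} satisfying the closedness condition ∂_l B_{jk} + ∂_j B_{kl} + ∂_k B_{lj} = 0 for all j,k,l. Then the magnetic Poisson bracket {f,g}^B := Σ_j (∂_{ξ_j}f ∂_{x_j}g − ∂_{ξ_j}g ∂_{x_j}f) + Σ_{j,k} B_{jk}(x) ∂_{ξ_j}f ∂_{ξ_k}g satisfies the Jacobi identity on C^∞(ℝ^{2N}; ℝ): for all smooth f, g, h : ℝ^{2N} → ℝ, {f,{g,h}^B}^B + {g,{h,f}^B}^B + {h,{f,g}^B}^B = 0. -/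
open MeasureTheory Filter Topology Real

noncomputable section

/-- The magnetic Poisson bracket `{f,g}^B`. -/
def poissonB {N : ℕ} (B : Fin N → Fin N → Vec N → ℝ) (f g : Vec N × Vec N → ℝ)
    (X : Vec N × Vec N) : ℝ :=
  (∑ j, (fderiv ℝ f X (0, Pi.single j 1) * fderiv ℝ g X (Pi.single j 1, 0)
       - fderiv ℝ g X (0, Pi.single j 1) * fderiv ℝ f X (Pi.single j 1, 0)))
  + ∑ j, ∑ k, B j k X.1 * fderiv ℝ f X (0, Pi.single j 1) * fderiv ℝ g X (0, Pi.single k 1)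

namespace MagJac

section Helpers
variable {E : Type*} [NormedAddCommGroup E] [NormedSpace ℝ E]

lemma fderiv_apply_contDiff {φ : E → ℝ} (hφ : ContDiff ℝ (⊤ : ℕ∞) φ) (v : E) :
    ContDiff ℝ (⊤ : ℕ∞) (fun Y => fderiv ℝ φ Y v) :=
  (ContinuousLinearMap.apply ℝ ℝ v).contDiff.comp (hφ.fderiv_right (by simp))

lemma D2_eq {φ : E → ℝ} (hφ : ContDiff ℝ (⊤ : ℕ∞) φ) (X v w : E) :
    fderiv ℝ (fun Y => fderiv ℝ φ Y v) X w = fderiv ℝ (fderiv ℝ φ) X w v := by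
  have h1 : DifferentiableAt ℝ (fderiv ℝ φ) X :=
    ((hφ.fderiv_right (m := 1) ((by exact WithTop.coe_le_coe.mpr le_top))).differentiable one_ne_zero).differentiableAt
  rw [fderiv_clm_apply h1 (differentiableAt_const v)]
  simp

lemma D2_symm {φ : E → ℝ} (hφ : ContDiff ℝ (⊤ : ℕ∞) φ) (X v w : E) :
    fderiv ℝ (fderiv ℝ φ) X v w = fderiv ℝ (fderiv ℝ φ) X w v :=
  (hφ.contDiffAt.isSymmSndFDerivAt (by simp only [minSmoothness_of_isRCLikeNormedField]; exact WithTop.coe_le_coe.mpr le_top)) v w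

lemma fderiv_sum_apply' {ι : Type*} [Fintype ι] {A : ι → E → ℝ} {x w : E}
    (h : ∀ i, DifferentiableAt ℝ (A i) x) :
    fderiv ℝ (fun y => ∑ i, A i y) x w = ∑ i, fderiv ℝ (A i) x w := by
  rw [fderiv_fun_sum (fun i _ => h i)]
  simp

lemma fderiv_mul_apply' {c d : E → ℝ} {x w : E} (hc : DifferentiableAt ℝ c x)
    (hd : DifferentiableAt ℝ d x) :
    fderiv ℝ (fun y => c y * d y) x w = fderiv ℝ c x w * d x + c x * fderiv ℝ d x w := by
  rw [fderiv_fun_mul hc hd]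
  simp [ContinuousLinearMap.add_apply, ContinuousLinearMap.smul_apply, smul_eq_mul]
  ring

end Helpers

variable {N : ℕ}

def ee : Fin N ⊕ Fin N → Vec N × Vec N
  | .inl j => (Pi.single j 1, 0)
  | .inr j => (0, Pi.single j 1)

def piF (B : Fin N → Fin N → Vec N → ℝ) : Fin N ⊕ Fin N → Fin N ⊕ Fin N → Vec N → ℝ
  | .inl _, .inl _ => fun _ => 0
  | .inl j, .inr k => fun _ => if j = k then -1 else 0
  | .inr j, .inl k => fun _ => if j = k then 1 else 0
  | .inr j, .inr k => fun x => B j k x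

def dpi (B : Fin N → Fin N → Vec N → ℝ) (X : Vec N × Vec N) :
    Fin N ⊕ Fin N → Fin N ⊕ Fin N → Vec N × Vec N → ℝ
  | .inl _, .inl _ => fun _ => 0
  | .inl _, .inr _ => fun _ => 0
  | .inr _, .inl _ => fun _ => 0
  | .inr j, .inr k => fun w => fderiv ℝ (B j k) X.1 w.1

variable {B : Fin N → Fin N → Vec N → ℝ}

lemma poisson_repr (B : Fin N → Fin N → Vec N → ℝ) (f g : Vec N × Vec N → ℝ)
    (X : Vec N × Vec N) :
    poissonB B f g X
      = ∑ a, ∑ b, piF B a b X.1 * fderiv ℝ f X (ee a) * fderiv ℝ g X (ee b) := by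
  rw [poissonB]
  simp only [Fintype.sum_sum_type, piF, ee]
  simp only [zero_mul, mul_zero, ite_mul, mul_ite, neg_mul, one_mul, neg_one_mul,
    Finset.sum_ite_eq, Finset.sum_ite_eq', Finset.mem_univ, if_true, Finset.sum_const_zero,
    Finset.sum_sub_distrib, Finset.sum_neg_distrib]
  simp only [Finset.sum_const_zero, Finset.sum_add_distrib, Finset.sum_neg_distrib]
  have h2 : ∑ x : Fin N, (fderiv ℝ f X) (Pi.single x 1, 0) * (fderiv ℝ g X) (0, Pi.single x 1)
      = ∑ x : Fin N, (fderiv ℝ g X) (0, Pi.single x 1) * (fderiv ℝ f X) (Pi.single x 1, 0) :=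
    Finset.sum_congr rfl fun x _ => by ring
  rw [h2]; ring

lemma piF_contDiff (hB : ∀ j k, ContDiff ℝ (⊤ : ℕ∞) (B j k)) (a b : Fin N ⊕ Fin N) :
    ContDiff ℝ (⊤ : ℕ∞) (fun Y : Vec N × Vec N => piF B a b Y.1) := by
  rcases a with j | j <;> rcases b with k | k
  · exact contDiff_const
  · exact contDiff_const
  · exact contDiff_const
  · exact (hB j k).comp contDiff_fst

lemma piF_fderiv (hB : ∀ j k, ContDiff ℝ (⊤ : ℕ∞) (B j k)) (a b : Fin N ⊕ Fin N)
    (X w : Vec N × Vec N) :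
    fderiv ℝ (fun Y : Vec N × Vec N => piF B a b Y.1) X w = dpi B X a b w := by
  rcases a with j | j <;> rcases b with k | k
  · simp [piF, dpi]
  · simp [piF, dpi]
  · simp [piF, dpi]
  · have h : HasFDerivAt (fun Y : Vec N × Vec N => B j k Y.1)
        ((fderiv ℝ (B j k) X.1).comp (ContinuousLinearMap.fst ℝ (Vec N) (Vec N))) X :=
      (((hB j k).differentiable (by simp) X.1).hasFDerivAt.comp X hasFDerivAt_fst)
    rw [show (fun Y : Vec N × Vec N => piF B (.inr j) (.inr k) Y.1)
        = fun Y : Vec N × Vec N => B j k Y.1 from rfl, h.fderiv]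
    simp [dpi]

lemma poisson_fderiv (hB : ∀ j k, ContDiff ℝ (⊤ : ℕ∞) (B j k)) {g h : Vec N × Vec N → ℝ}
    (hg : ContDiff ℝ (⊤ : ℕ∞) g) (hh : ContDiff ℝ (⊤ : ℕ∞) h) (X w : Vec N × Vec N) :
    fderiv ℝ (poissonB B g h) X w
      = ∑ a, ∑ b, (dpi B X a b w * (fderiv ℝ g X (ee a) * fderiv ℝ h X (ee b))
          + piF B a b X.1 * (fderiv ℝ (fderiv ℝ g) X (ee a) w * fderiv ℝ h X (ee b)
              + fderiv ℝ g X (ee a) * fderiv ℝ (fderiv ℝ h) X (ee b) w)) := by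
  have hrepr : poissonB B g h
      = fun Y => ∑ a, ∑ b, piF B a b Y.1 * fderiv ℝ g Y (ee a) * fderiv ℝ h Y (ee b) :=
    funext fun Y => poisson_repr B g h Y
  have hpi : ∀ a b : Fin N ⊕ Fin N,
      DifferentiableAt ℝ (fun Y : Vec N × Vec N => piF B a b Y.1) X :=
    fun a b => ((piF_contDiff hB a b).differentiable (by simp)).differentiableAt
  have hDg : ∀ v, DifferentiableAt ℝ (fun Y : Vec N × Vec N => fderiv ℝ g Y v) X :=
    fun v => ((fderiv_apply_contDiff hg v).differentiable (by simp)).differentiableAt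
  have hDh : ∀ v, DifferentiableAt ℝ (fun Y : Vec N × Vec N => fderiv ℝ h Y v) X :=
    fun v => ((fderiv_apply_contDiff hh v).differentiable (by simp)).differentiableAt
  have hterm : ∀ a b : Fin N ⊕ Fin N, DifferentiableAt ℝ
      (fun Y : Vec N × Vec N => piF B a b Y.1 * fderiv ℝ g Y (ee a) * fderiv ℝ h Y (ee b)) X :=
    fun a b => ((hpi a b).mul (hDg (ee a))).mul (hDh (ee b))
  rw [hrepr]
  rw [fderiv_sum_apply' (fun a => by exact DifferentiableAt.fun_sum fun b _ => hterm a b)]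
  refine Finset.sum_congr rfl fun a _ => ?_
  rw [fderiv_sum_apply' (fun b => hterm a b)]
  refine Finset.sum_congr rfl fun b _ => ?_
  rw [fderiv_mul_apply' ((hpi a b).fun_mul (hDg (ee a))) (hDh (ee b)),
      fderiv_mul_apply' (hpi a b) (hDg (ee a)),
      piF_fderiv hB, D2_eq hg, D2_eq hh, D2_symm hg (X := X), D2_symm hh (X := X)]
  ring

section Alg
variable {ι : Type*} [Fintype ι]

abbrev Q (ι : Type*) := ι × ι × ι × ι

def qA (pp : ι → ι → ℝ) (Dp : ι → ι → ι → ℝ) (u w1 w2 : ι → ℝ) : Q ι → ℝ := fun p =>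
  pp p.1 p.2.1 * u p.1 * (Dp p.2.2.1 p.2.2.2 p.2.1 * (w1 p.2.2.1 * w2 p.2.2.2))

def qB (pp : ι → ι → ℝ) (u w2 : ι → ℝ) (K1 : ι → ι → ℝ) : Q ι → ℝ := fun p =>
  pp p.1 p.2.1 * u p.1 * (pp p.2.2.1 p.2.2.2 * (K1 p.2.2.1 p.2.1 * w2 p.2.2.2))

def qC (pp : ι → ι → ℝ) (u w1 : ι → ℝ) (K2 : ι → ι → ℝ) : Q ι → ℝ := fun p =>
  pp p.1 p.2.1 * u p.1 * (pp p.2.2.1 p.2.2.2 * (w1 p.2.2.1 * K2 p.2.2.2 p.2.1))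

lemma nest4 (F : ι → ι → ι → ι → ℝ) :
    (∑ p : Q ι, F p.1 p.2.1 p.2.2.1 p.2.2.2) = ∑ c, ∑ d, ∑ a, ∑ b, F c d a b := by
  rw [Fintype.sum_prod_type]
  exact Finset.sum_congr rfl fun c _ => by
    rw [Fintype.sum_prod_type]
    exact Finset.sum_congr rfl fun d _ => by rw [Fintype.sum_prod_type]

variable (pp : ι → ι → ℝ) (Dp : ι → ι → ι → ℝ)

lemma key (u w1 w2 : ι → ℝ) (K1 K2 : ι → ι → ℝ) :
    (∑ c, ∑ d, pp c d * u c * (∑ a, ∑ b, (Dp a b d * (w1 a * w2 b)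
        + pp a b * (K1 a d * w2 b + w1 a * K2 b d))))
    = (∑ p : Q ι, qA pp Dp u w1 w2 p) + (∑ p : Q ι, qB pp u w2 K1 p)
      + (∑ p : Q ι, qC pp u w1 K2 p) := by
  calc (∑ c, ∑ d, pp c d * u c * (∑ a, ∑ b, (Dp a b d * (w1 a * w2 b)
        + pp a b * (K1 a d * w2 b + w1 a * K2 b d))))
      = ∑ c, ∑ d, ∑ a, ∑ b, (qA pp Dp u w1 w2 (c,d,a,b) + qB pp u w2 K1 (c,d,a,b)
          + qC pp u w1 K2 (c,d,a,b)) := by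
        refine Finset.sum_congr rfl fun c _ => Finset.sum_congr rfl fun d _ => ?_
        rw [Finset.mul_sum]
        refine Finset.sum_congr rfl fun a _ => ?_
        rw [Finset.mul_sum]
        refine Finset.sum_congr rfl fun b _ => ?_
        simp only [qA, qB, qC]; ring
    _ = ∑ p : Q ι, (qA pp Dp u w1 w2 p + qB pp u w2 K1 p + qC pp u w1 K2 p) := (nest4 _).symm
    _ = _ := by rw [Finset.sum_add_distrib, Finset.sum_add_distrib]

lemma pairBC (hA : ∀ a b, pp a b = - pp b a) (u v : ι → ℝ) (K : ι → ι → ℝ)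
    (hK : ∀ x y, K x y = K y x) :
    (∑ p : Q ι, qB pp u v K p) + (∑ p : Q ι, qC pp v u K p) = 0 := by
  have h : (∑ p : Q ι, qC pp v u K p) = ∑ p : Q ι, -(qB pp u v K p) := by
    refine Fintype.sum_equiv ⟨fun p : Q ι => (p.2.2.1, p.2.2.2, p.2.1, p.1),
      fun p : Q ι => (p.2.2.2, p.2.2.1, p.1, p.2.1), fun ⟨a,b,c,d⟩ => rfl, fun ⟨a,b,c,d⟩ => rfl⟩
      _ _ fun p => ?_
    obtain ⟨c, d, a, b⟩ := p
    simp only [qB, qC, Equiv.coe_fn_mk]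
    rw [hA d c, hK d b]
    ring
  rw [h, ← Finset.sum_add_distrib]
  simp

lemma partA (hJ : ∀ a b c, ∑ d, (pp c d * Dp a b d + pp a d * Dp b c d + pp b d * Dp c a d) = 0)
    (df dg dh : ι → ℝ) :
    (∑ p : Q ι, qA pp Dp df dg dh p) + (∑ p : Q ι, qA pp Dp dg dh df p)
      + (∑ p : Q ι, qA pp Dp dh df dg p) = 0 := by
  have r2 : (∑ p : Q ι, qA pp Dp dg dh df p)
      = ∑ p : Q ι, pp p.2.2.1 p.2.1 * dg p.2.2.1
          * (Dp p.2.2.2 p.1 p.2.1 * (dh p.2.2.2 * df p.1)) := by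
    refine Fintype.sum_equiv ⟨fun p : Q ι => (p.2.2.2, p.2.1, p.1, p.2.2.1),
      fun p : Q ι => (p.2.2.1, p.2.1, p.2.2.2, p.1), fun ⟨a,b,c,d⟩ => rfl, fun ⟨a,b,c,d⟩ => rfl⟩
      _ _ fun p => ?_
    obtain ⟨c, d, a, b⟩ := p
    rfl
  have r3 : (∑ p : Q ι, qA pp Dp dh df dg p)
      = ∑ p : Q ι, pp p.2.2.2 p.2.1 * dh p.2.2.2
          * (Dp p.1 p.2.2.1 p.2.1 * (df p.1 * dg p.2.2.1)) := by
    refine Fintype.sum_equiv ⟨fun p : Q ι => (p.2.2.1, p.2.1, p.2.2.2, p.1),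
      fun p : Q ι => (p.2.2.2, p.2.1, p.1, p.2.2.1), fun ⟨a,b,c,d⟩ => rfl, fun ⟨a,b,c,d⟩ => rfl⟩
      _ _ fun p => ?_
    obtain ⟨c, d, a, b⟩ := p
    rfl
  rw [r2, r3, ← Finset.sum_add_distrib, ← Finset.sum_add_distrib]
  have hpt : ∀ p : Q ι, qA pp Dp df dg dh p
      + pp p.2.2.1 p.2.1 * dg p.2.2.1 * (Dp p.2.2.2 p.1 p.2.1 * (dh p.2.2.2 * df p.1))
      + pp p.2.2.2 p.2.1 * dh p.2.2.2 * (Dp p.1 p.2.2.1 p.2.1 * (df p.1 * dg p.2.2.1))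
      = (df p.1 * (dg p.2.2.1 * dh p.2.2.2))
        * (pp p.1 p.2.1 * Dp p.2.2.1 p.2.2.2 p.2.1 + pp p.2.2.1 p.2.1 * Dp p.2.2.2 p.1 p.2.1
            + pp p.2.2.2 p.2.1 * Dp p.1 p.2.2.1 p.2.1) := by
    intro p; obtain ⟨c, d, a, b⟩ := p; simp only [qA]; ring
  rw [Finset.sum_congr rfl fun p _ => hpt p]
  have rρ : (∑ p : Q ι, (df p.1 * (dg p.2.2.1 * dh p.2.2.2))
        * (pp p.1 p.2.1 * Dp p.2.2.1 p.2.2.2 p.2.1 + pp p.2.2.1 p.2.1 * Dp p.2.2.2 p.1 p.2.1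
            + pp p.2.2.2 p.2.1 * Dp p.1 p.2.2.1 p.2.1))
      = ∑ q : Q ι, (df q.1 * (dg q.2.1 * dh q.2.2.1))
        * (pp q.1 q.2.2.2 * Dp q.2.1 q.2.2.1 q.2.2.2 + pp q.2.1 q.2.2.2 * Dp q.2.2.1 q.1 q.2.2.2
            + pp q.2.2.1 q.2.2.2 * Dp q.1 q.2.1 q.2.2.2) := by
    refine (Fintype.sum_equiv ⟨fun q : Q ι => (q.1, q.2.2.2, q.2.1, q.2.2.1),
      fun p : Q ι => (p.1, p.2.2.1, p.2.2.2, p.2.1), fun ⟨a,b,c,d⟩ => rfl, fun ⟨a,b,c,d⟩ => rfl⟩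
      _ _ fun q => ?_).symm
    obtain ⟨c, a, b, d⟩ := q
    rfl
  rw [rρ, nest4 (fun c a b d => (df c * (dg a * dh b))
      * (pp c d * Dp a b d + pp a d * Dp b c d + pp b d * Dp c a d))]
  refine Finset.sum_eq_zero fun c _ => Finset.sum_eq_zero fun a _ => Finset.sum_eq_zero fun b _ => ?_
  rw [← Finset.mul_sum, hJ a b c, mul_zero]

lemma jacobi_alg (hA : ∀ a b, pp a b = - pp b a)
    (hJ : ∀ a b c, ∑ d, (pp c d * Dp a b d + pp a d * Dp b c d + pp b d * Dp c a d) = 0)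
    (df dg dh : ι → ℝ) (F2 G2 H2 : ι → ι → ℝ)
    (hF : ∀ u v, F2 u v = F2 v u) (hG : ∀ u v, G2 u v = G2 v u)
    (hH : ∀ u v, H2 u v = H2 v u) :
    (∑ c, ∑ d, pp c d * df c * (∑ a, ∑ b, (Dp a b d * (dg a * dh b)
        + pp a b * (G2 a d * dh b + dg a * H2 b d))))
    + (∑ c, ∑ d, pp c d * dg c * (∑ a, ∑ b, (Dp a b d * (dh a * df b)
        + pp a b * (H2 a d * df b + dh a * F2 b d))))
    + (∑ c, ∑ d, pp c d * dh c * (∑ a, ∑ b, (Dp a b d * (df a * dg b)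
        + pp a b * (F2 a d * dg b + df a * G2 b d)))) = 0 := by
  rw [key pp Dp df dg dh G2 H2, key pp Dp dg dh df H2 F2, key pp Dp dh df dg F2 G2]
  have p1 := pairBC pp hA df dh G2 hG
  have p2 := pairBC pp hA dg df H2 hH
  have p3 := pairBC pp hA dh dg F2 hF
  have pA := partA pp Dp hJ df dg dh
  linarith

end Alg

lemma piF_antisymm (hBanti : ∀ j k x, B j k x = - B k j x) (x : Vec N)
    (a b : Fin N ⊕ Fin N) : piF B a b x = - piF B b a x := by
  rcases a with j | j <;> rcases b with k | k
  · simp [piF]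
  · by_cases hjk : j = k
    · subst hjk; simp [piF]
    · simp [piF, hjk, Ne.symm hjk]
  · by_cases hjk : j = k
    · subst hjk; simp [piF]
    · simp [piF, hjk, Ne.symm hjk]
  · exact hBanti j k x

lemma hJ_concrete (hBclosed : ∀ j k l x,
      fderiv ℝ (B j k) x (Pi.single l 1) + fderiv ℝ (B k l) x (Pi.single j 1)
        + fderiv ℝ (B l j) x (Pi.single k 1) = 0)
    (X : Vec N × Vec N) (a b c : Fin N ⊕ Fin N) :
    ∑ d, (piF B c d X.1 * dpi B X a b (ee d) + piF B a d X.1 * dpi B X b c (ee d)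
      + piF B b d X.1 * dpi B X c a (ee d)) = 0 := by
  rcases a with j | j <;> rcases b with k | k <;> rcases c with m | m <;>
    simp only [Fintype.sum_sum_type, dpi, piF, ee] <;>
    simp [ite_mul, zero_mul, one_mul, Finset.sum_add_distrib, Finset.sum_ite_eq,
      Finset.sum_ite_eq']
  linarith [hBclosed j k m X.1]

end MagJac

/-- The magnetic Poisson bracket satisfies the Jacobi identity whenever the (antisymmetric,
smooth) magnetic field is closed. -/
theorem magnetic_poisson_jacobi {N : ℕ} (B : Fin N → Fin N → Vec N → ℝ)
    (hBsmooth : ∀ j k, ContDiff ℝ (⊤ : ℕ∞) (B j k))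
    (hBanti : ∀ j k x, B j k x = - B k j x)
    (hBclosed : ∀ j k l x,
      fderiv ℝ (B j k) x (Pi.single l 1) + fderiv ℝ (B k l) x (Pi.single j 1)
        + fderiv ℝ (B l j) x (Pi.single k 1) = 0)
    (f g h : Vec N × Vec N → ℝ)
    (hf : ContDiff ℝ (⊤ : ℕ∞) f) (hg : ContDiff ℝ (⊤ : ℕ∞) g) (hh : ContDiff ℝ (⊤ : ℕ∞) h)
    (X : Vec N × Vec N) :
    poissonB B f (poissonB B g h) X + poissonB B g (poissonB B h f) X
      + poissonB B h (poissonB B f g) X = 0 := by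
  classical
  open MagJac in
  have key : ∀ (u v w : Vec N × Vec N → ℝ), ContDiff ℝ (⊤ : ℕ∞) u → ContDiff ℝ (⊤ : ℕ∞) v → ContDiff ℝ (⊤ : ℕ∞) w →
      poissonB B u (poissonB B v w) X
      = ∑ c, ∑ d, piF B c d X.1 * fderiv ℝ u X (ee c)
          * (∑ a, ∑ b, (dpi B X a b (ee d) * (fderiv ℝ v X (ee a) * fderiv ℝ w X (ee b))
              + piF B a b X.1 * (fderiv ℝ (fderiv ℝ v) X (ee a) (ee d) * fderiv ℝ w X (ee b)
                  + fderiv ℝ v X (ee a) * fderiv ℝ (fderiv ℝ w) X (ee b) (ee d)))) := by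
    intro u v w hu hv hw
    rw [poisson_repr]
    exact Finset.sum_congr rfl fun c _ => Finset.sum_congr rfl fun d _ => by
      rw [poisson_fderiv hBsmooth hv hw X (ee d)]
  rw [key f g h hf hg hh, key g h f hg hh hf, key h f g hh hf hg]
  exact MagJac.jacobi_alg (fun c d => piF B c d X.1) (fun a b d => dpi B X a b (ee d))
    (fun a b => piF_antisymm hBanti X.1 a b)
    (fun a b c => hJ_concrete hBclosed X a b c)
    (fun c => fderiv ℝ f X (ee c)) (fun c => fderiv ℝ g X (ee c)) (fun c => fderiv ℝ h X (ee c))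
    (fun u v => fderiv ℝ (fderiv ℝ f) X (ee u) (ee v))
    (fun u v => fderiv ℝ (fderiv ℝ g) X (ee u) (ee v))
    (fun u v => fderiv ℝ (fderiv ℝ h) X (ee u) (ee v))
    (fun u v => D2_symm hf X (ee u) (ee v))
    (fun u v => D2_symm hg X (ee u) (ee v))
    (fun u v => D2_symm hh X (ee u) (ee v))

end
end
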